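/- arXiv:2309.00294 — 6 statements merged into one kernel-verified Lean document; each statement's English description precedes it below -/
import Mathlib

section
/- Let γ be an element of SL(2,ℝ) with |trace(γ)| > 2 (equivalently, γ has two distinct real eigenvalues). Then the conjugacy class [γ] = {g γ g⁻¹ : g ∈ SL(2,ℝ)} is a closed subset of SL(2,ℝ). -/
open Matrix MeasureTheory

/-- `SL(2,ℝ)`: the group of 2×2 real matrices of determinant 1. -/
abbrev SL2 := Matrix.SpecialLinearGroup (Fin 2) ℝ

/-- The topology on `SL(2,ℝ)` is the subspace topology inherited from the
space of 2×2 real matrices. -/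
instance : TopologicalSpace SL2 :=
  TopologicalSpace.induced (fun g : SL2 => (g : Matrix (Fin 2) (Fin 2) ℝ)) inferInstance

/-- The conjugacy class `[γ] = {g γ g⁻¹ : g ∈ SL(2,ℝ)}`. -/
def conjClass (γ : SL2) : Set SL2 := {x | ∃ g : SL2, g * γ * g⁻¹ = x}

/-- The rotation matrix `k_θ = [[cos θ, −sin θ],[sin θ, cos θ]]` as an element of `SL(2,ℝ)`. -/
noncomputable def kmat (θ : ℝ) : SL2 :=
  ⟨!![Real.cos θ, -Real.sin θ; Real.sin θ, Real.cos θ], by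
    simp [Matrix.det_fin_two_of]
    nlinarith [Real.sin_sq_add_cos_sq θ]⟩

/-- The diagonal matrix `a_t = [[eᵗ, 0],[0, e⁻ᵗ]]` as an element of `SL(2,ℝ)`. -/
noncomputable def amat (t : ℝ) : SL2 :=
  ⟨!![Real.exp t, 0; 0, Real.exp (-t)], by
    simp [Matrix.det_fin_two_of, ← Real.exp_add]⟩

/-- The unipotent matrix `n_u = [[1, u],[0, 1]]` as an element of `SL(2,ℝ)`. -/
def nmat (u : ℝ) : SL2 :=
  ⟨!![1, u; 0, 1], by simp [Matrix.det_fin_two_of]⟩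

lemma SL2_det (A : SL2) : A.1 0 0 * A.1 1 1 - A.1 0 1 * A.1 1 0 = 1 := by
  have := A.2
  rwa [Matrix.det_fin_two] at this

lemma conj_to_diag (t : ℝ) (ht : 2 < |t|) (d : SL2)
    (hd : (d : Matrix (Fin 2) (Fin 2) ℝ)
      = !![(t + Real.sqrt (t^2-4))/2, 0; 0, (t - Real.sqrt (t^2-4))/2])
    (A : SL2) (hA : Matrix.trace (A : Matrix (Fin 2) (Fin 2) ℝ) = t) :
    ∃ g : SL2, g * d * g⁻¹ = A := by
  have ht2 : 0 < t^2 - 4 := by nlinarith [sq_abs t]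
  set s := Real.sqrt (t^2 - 4) with hs
  have hs2 : s^2 = t^2 - 4 := Real.sq_sqrt ht2.le
  have hs0 : 0 < s := Real.sqrt_pos.mpr ht2
  set l := (t+s)/2 with hl
  set m := (t-s)/2 with hm
  have hlm : l * m = 1 := by rw [hl, hm]; linear_combination (-(1:ℝ)/4) * hs2
  have hml : l - m = s := by rw [hl, hm]; ring
  have hsum : l + m = t := by rw [hl, hm]; ring
  have hquadl : l^2 = t*l - 1 := by rw [hl]; linear_combination ((1:ℝ)/4) * hs2
  have hquadm : m^2 = t*m - 1 := by rw [hm]; linear_combination ((1:ℝ)/4) * hs2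
  have hDval : (d : Matrix (Fin 2) (Fin 2) ℝ) = !![l, 0; 0, m] := hd
  set a := A.1 0 0 with ha
  set b := A.1 0 1 with hb'
  set c := A.1 1 0 with hc
  set e := A.1 1 1 with he
  have hdet : a * e - b * c = 1 := SL2_det A
  have htr : a + e = t := by
    rw [Matrix.trace_fin_two] at hA; exact hA
  have hAval : (A : Matrix (Fin 2) (Fin 2) ℝ) = !![a, b; c, e] := by
    ext i j; fin_cases i <;> fin_cases j <;> simp [ha, hb', hc, he]
  clear_value s
  clear_value l m a b c e
  have hsne : s ≠ 0 := hs0.ne'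
  have hmls : m - l ≠ 0 := by intro h'; apply hsne; linarith
  by_cases hb : b ≠ 0
  · -- generic case
    have hdetg : Matrix.det !![b/(b*(m-l)), b; (l-a)/(b*(m-l)), m-a] = 1 := by
      rw [Matrix.det_fin_two_of]
      field_simp
      ring
    refine ⟨⟨_, hdetg⟩, ?_⟩
    apply mul_inv_eq_iff_eq_mul.mpr
    apply Subtype.coe_injective
    simp only [Matrix.SpecialLinearGroup.coe_mul, hDval, hAval]
    show !![b/(b*(m-l)), b; (l-a)/(b*(m-l)), m-a] * _ = _ * !![b/(b*(m-l)), b; (l-a)/(b*(m-l)), m-a]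
    rw [hDval, hAval]
    ext i j
    fin_cases i <;> fin_cases j <;>
      simp [Matrix.mul_apply, Fin.sum_univ_two]
    · ring
    · ring
    · field_simp
      linear_combination hquadl - l*htr + hdet
    · linear_combination hquadm - m*htr + hdet
  · push_neg at hb
    have hae : a * e = 1 := by rw [← hdet, hb]; ring
    have hroot : (a - l) * (a - m) = 0 := by
      linear_combination hlm - a * hsum + a * htr - hae
    have hlne : l ≠ 0 := fun h0 => by simp [h0] at hlm
    have hmne : m ≠ 0 := fun h0 => by simp [h0] at hlm
    have hlmne : l - m ≠ 0 := by rw [hml]; exact hsne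
    rcases mul_eq_zero.mp hroot with h1 | h1
    · have hal : a = l := by linarith [sub_eq_zero.mp h1]
      have hem : e = m :=
        mul_left_cancel₀ hlne (by linear_combination hae - e*hal - hlm)
      have hdetg : Matrix.det !![(1:ℝ), 0; c/(l-m), 1] = 1 := by
        rw [Matrix.det_fin_two_of]; ring
      refine ⟨⟨_, hdetg⟩, ?_⟩
      apply mul_inv_eq_iff_eq_mul.mpr
      apply Subtype.coe_injective
      simp only [Matrix.SpecialLinearGroup.coe_mul, hDval, hAval]
      show !![(1:ℝ), 0; c/(l-m), 1] * _ = _ * !![(1:ℝ), 0; c/(l-m), 1]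
      rw [hDval, hAval]
      ext i j
      fin_cases i <;> fin_cases j <;>
        simp [Matrix.mul_apply, Fin.sum_univ_two, hb, hal, hem]
      field_simp
      ring
    · have hal : a = m := by linarith [sub_eq_zero.mp h1]
      have hem : e = l :=
        mul_left_cancel₀ hmne (by linear_combination hae - e*hal - hlm)
      have hdetg : Matrix.det !![(0:ℝ), -1; 1, c/(l-m)] = 1 := by
        rw [Matrix.det_fin_two_of]; ring
      refine ⟨⟨_, hdetg⟩, ?_⟩
      apply mul_inv_eq_iff_eq_mul.mpr
      apply Subtype.coe_injective
      simp only [Matrix.SpecialLinearGroup.coe_mul, hDval, hAval]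
      show !![(0:ℝ), -1; 1, c/(l-m)] * _ = _ * !![(0:ℝ), -1; 1, c/(l-m)]
      rw [hDval, hAval]
      ext i j
      fin_cases i <;> fin_cases j <;>
        simp [Matrix.mul_apply, Fin.sum_univ_two, hb, hal, hem]
      · field_simp
        ring

/-- The conjugacy class of a hyperbolic element (|trace| > 2) of SL(2,ℝ) is closed. -/
theorem conjClass_isClosed_of_abs_trace_gt_two (γ : SL2)
    (h : |Matrix.trace (γ : Matrix (Fin 2) (Fin 2) ℝ)| > 2) :
    IsClosed (conjClass γ) := by
  set t := Matrix.trace (γ : Matrix (Fin 2) (Fin 2) ℝ) with htdef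
  have ht2 : 0 < t^2 - 4 := by nlinarith [sq_abs t]
  have hs2 : (Real.sqrt (t^2-4))^2 = t^2 - 4 := Real.sq_sqrt ht2.le
  have hdet : Matrix.det !![(t + Real.sqrt (t^2-4))/2, 0; 0, (t - Real.sqrt (t^2-4))/2] = 1 := by
    rw [Matrix.det_fin_two_of]; linear_combination (-(1:ℝ)/4) * hs2
  set d : SL2 := ⟨_, hdet⟩ with hddef
  have hset : conjClass γ
      = (fun x : SL2 => Matrix.trace (x : Matrix (Fin 2) (Fin 2) ℝ)) ⁻¹' {t} := by
    ext x
    constructor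
    · rintro ⟨g, rfl⟩
      show Matrix.trace _ ∈ ({t} : Set ℝ)
      simp only [Set.mem_singleton_iff, Matrix.SpecialLinearGroup.coe_mul]
      rw [Matrix.trace_mul_comm, ← Matrix.mul_assoc, ← Matrix.SpecialLinearGroup.coe_mul,
        inv_mul_cancel]
      simp [htdef]
    · intro hx
      obtain ⟨g₁, hg₁⟩ := conj_to_diag t h d rfl γ rfl
      obtain ⟨g₂, hg₂⟩ := conj_to_diag t h d rfl x hx
      exact ⟨g₂ * g₁⁻¹, by rw [← hg₁, ← hg₂]; group⟩
  rw [hset]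
  exact isClosed_singleton.preimage (Continuous.matrix_trace continuous_induced_dom)
end

section
/- Let x be a nonzero real number and let γ = [[1, x],[0, 1]] ∈ SL(2,ℝ). Then the closure of the conjugacy class [γ] in SL(2,ℝ) equals [γ] ∪ {I}; in particular, every limit point of [γ] lying outside [γ] equals the identity matrix. -/
open Matrix MeasureTheory

lemma sl2_det (g : SL2) : g 0 0 * g 1 1 - g 0 1 * g 1 0 = 1 := by
  have h := g.2; rw [Matrix.det_fin_two] at h; exact h

lemma conj_nmat (x : ℝ) (g : SL2) :
    ((g * nmat x * g⁻¹ : SL2) : Matrix (Fin 2) (Fin 2) ℝ) =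
      !![1 - x * (g 0 0) * (g 1 0), x * (g 0 0)^2;
         -(x * (g 1 0)^2), 1 + x * (g 0 0) * (g 1 0)] := by
  have hdet := sl2_det g
  rw [Matrix.SpecialLinearGroup.coe_mul, Matrix.SpecialLinearGroup.coe_mul]
  ext i j
  fin_cases i <;> fin_cases j <;>
    simp [Matrix.SpecialLinearGroup.coe_inv, Matrix.SpecialLinearGroup.coe_mul, nmat, Matrix.mul_apply,
      Fin.sum_univ_two, Matrix.adjugate_fin_two] <;>
    first | linear_combination hdet | linear_combination

lemma entry_cont (i j : Fin 2) :
    Continuous fun m : SL2 => (m : Matrix (Fin 2) (Fin 2) ℝ) i j := by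
  have h1 : Continuous fun M : Matrix (Fin 2) (Fin 2) ℝ => M i := continuous_apply i
  have h2 : Continuous fun M : Matrix (Fin 2) (Fin 2) ℝ => M i j := (continuous_apply j).comp h1
  exact h2.comp continuous_induced_dom

lemma nmat_zero : nmat 0 = 1 := by
  ext i j
  fin_cases i <;> fin_cases j <;> simp [nmat]

/-- If `m` has trace 2, `x·m₀₁ ≥ 0`, `x·m₁₀ ≤ 0`, and `m ≠ 1`, then `m` is
conjugate to `nmat x`. -/
lemma mem_class_of (x : ℝ) (hx : x ≠ 0) (m : SL2)
    (htr : m 0 0 + m 1 1 = 2) (hb : 0 ≤ x * m 0 1) (hc : x * m 1 0 ≤ 0)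
    (hne : m ≠ 1) : m ∈ conjClass (nmat x) := by
  have hdet := sl2_det m
  set a : ℝ := m 0 0 - 1 with ha
  set b : ℝ := m 0 1 with hbdef
  set c : ℝ := m 1 0 with hcdef
  have h11 : m 1 1 = 1 - a := by rw [ha]; linarith
  have h00 : (m 0 0 : ℝ) = 1 + a := by rw [ha]; ring
  have hsq : a ^ 2 = -(b * c) := by
    have hdet' : (1 + a) * (1 - a) - b * c = 1 := by rw [← h00, ← h11]; exact hdet
    linear_combination -hdet'
  by_cases hb0 : b = 0
  · have ha0 : a = 0 := by
      have h2 : a ^ 2 = 0 := by rw [hsq, hb0]; ring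
      exact pow_eq_zero_iff (by norm_num) |>.mp h2
    by_cases hc0 : c = 0
    · exfalso; apply hne
      ext i j
      fin_cases i <;> fin_cases j <;>
        simp [Matrix.one_apply] <;> [skip; exact hb0; exact hc0; skip] <;> linarith
    · -- c ≠ 0, b = 0, a = 0
      have hcx : -c / x > 0 := by
        rcases lt_or_gt_of_ne hc0 with h | h
        · have hx' : 0 < x := by
            rcases lt_or_gt_of_ne hx with h2 | h2
            · nlinarith
            · exact h2
          exact div_pos (by linarith) hx'
        · have hx' : x < 0 := by
            rcases lt_or_gt_of_ne hx with h2 | h2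
            · exact h2
            · nlinarith
          have : -c < 0 := by linarith
          exact div_pos_of_neg_of_neg this hx'
      set r : ℝ := Real.sqrt (-c / x) with hr
      have hrpos : 0 < r := Real.sqrt_pos.mpr hcx
      have hr2 : r ^ 2 = -c / x := Real.sq_sqrt hcx.le
      have hdr : (!![0, -1/r; r, 0] : Matrix (Fin 2) (Fin 2) ℝ).det = 1 := by
        rw [Matrix.det_fin_two_of]; field_simp; norm_num
      refine ⟨⟨!![0, -1/r; r, 0], hdr⟩, ?_⟩
      apply Subtype.ext
      erw [conj_nmat]
      have e00 : ((⟨!![0, -1/r; r, 0], by rw [Matrix.det_fin_two_of]; field_simp; norm_num⟩ : SL2) : Matrix (Fin 2) (Fin 2) ℝ) 0 0 = 0 := rfl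
      ext i j
      fin_cases i <;> fin_cases j <;>
        simp [Matrix.one_apply]
      · rw [ha] at *; linarith
      · exact hb0.symm
      · rw [hr2]; field_simp; exact hcdef
      · rw [h11]; linarith
  · -- b ≠ 0
    have hbx : b / x > 0 := by
      rcases lt_or_gt_of_ne hb0 with h | h
      · have hx' : x < 0 := by
          rcases lt_or_gt_of_ne hx with h2 | h2
          · exact h2
          · nlinarith
        exact div_pos_of_neg_of_neg h hx'
      · have hx' : 0 < x := by
          rcases lt_or_gt_of_ne hx with h2 | h2
          · nlinarith
          · exact h2
        positivity
    set p : ℝ := Real.sqrt (b / x) with hp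
    have hppos : 0 < p := Real.sqrt_pos.mpr hbx
    have hp2 : p ^ 2 = b / x := Real.sq_sqrt hbx.le
    set r : ℝ := -a / (x * p) with hr
    have hxp2 : x * p ^ 2 = b := by rw [hp2]; field_simp
    have hxpr : x * p * r = -a := by rw [hr]; field_simp
    have hxr2 : -(x * r ^ 2) = c := by
      have : x * r ^ 2 = a ^ 2 / (x * p ^ 2) := by rw [hr]; field_simp
      rw [this, hxp2, hsq]
      field_simp
    have hdp : (!![p, 0; r, 1/p] : Matrix (Fin 2) (Fin 2) ℝ).det = 1 := by
      rw [Matrix.det_fin_two_of]; field_simp; ring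
    refine ⟨⟨!![p, 0; r, 1/p], hdp⟩, ?_⟩
    apply Subtype.ext
    erw [conj_nmat]
    ext i j
    fin_cases i <;> fin_cases j <;> simp
    · have : x * p * r = -a := hxpr
      rw [ha] at *; linarith
    · exact hxp2
    · exact hxr2
    · rw [h11]; linarith [hxpr]

theorem class_subset_C (x : ℝ) :
    conjClass (nmat x) ⊆ {m : SL2 | (m 0 0 : ℝ) + m 1 1 = 2 ∧ 0 ≤ x * m 0 1 ∧ x * m 1 0 ≤ 0} := by
  rintro m ⟨g, rfl⟩
  have h := conj_nmat x g
  have e00 : ((g * nmat x * g⁻¹ : SL2) : Matrix (Fin 2) (Fin 2) ℝ) 0 0 = 1 - x * (g 0 0) * (g 1 0) := by rw [h]; simp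
  have e01 : ((g * nmat x * g⁻¹ : SL2) : Matrix (Fin 2) (Fin 2) ℝ) 0 1 = x * (g 0 0)^2 := by rw [h]; simp
  have e10 : ((g * nmat x * g⁻¹ : SL2) : Matrix (Fin 2) (Fin 2) ℝ) 1 0 = -(x * (g 1 0)^2) := by rw [h]; simp
  have e11 : ((g * nmat x * g⁻¹ : SL2) : Matrix (Fin 2) (Fin 2) ℝ) 1 1 = 1 + x * (g 0 0) * (g 1 0) := by rw [h]; simp
  refine ⟨?_, ?_, ?_⟩
  · show ((g * nmat x * g⁻¹ : SL2) : Matrix (Fin 2) (Fin 2) ℝ) 0 0 + _ = 2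
    rw [e00, e11]; ring
  · show 0 ≤ x * ((g * nmat x * g⁻¹ : SL2) : Matrix (Fin 2) (Fin 2) ℝ) 0 1
    rw [e01, show x * (x * (g 0 0 : ℝ)^2) = (x * g 0 0)^2 from by ring]; positivity
  · show x * ((g * nmat x * g⁻¹ : SL2) : Matrix (Fin 2) (Fin 2) ℝ) 1 0 ≤ 0
    rw [e10]
    have : 0 ≤ x ^ 2 * (g 1 0) ^ 2 := by positivity
    nlinarith

lemma nmat_continuous : Continuous (fun u : ℝ => nmat u) := by
  rw [continuous_induced_rng]
  have : ((fun g : SL2 => (g : Matrix (Fin 2) (Fin 2) ℝ)) ∘ fun u => nmat u)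
      = fun u : ℝ => !![(1:ℝ), u; 0, 1] := rfl
  rw [this]
  apply continuous_matrix
  intro i j
  fin_cases i <;> fin_cases j <;> simp <;>
    first | exact continuous_const | exact continuous_id

lemma one_mem_closure (x : ℝ) (hx : x ≠ 0) : (1 : SL2) ∈ closure (conjClass (nmat x)) := by
  have htend : Filter.Tendsto (fun n : ℕ => nmat (x / (n + 1))) Filter.atTop (nhds 1) := by
    have h0 : Filter.Tendsto (fun n : ℕ => x / (n + 1)) Filter.atTop (nhds 0) := by
      have := tendsto_one_div_add_atTop_nhds_zero_nat.const_mul x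
      simpa [div_eq_mul_inv, mul_comm] using this
    have := (nmat_continuous.tendsto 0).comp h0
    rwa [nmat_zero] at this
  apply mem_closure_of_tendsto htend
  filter_upwards with n
  apply mem_class_of x hx
  · show ((nmat (x / (n+1)) : SL2) : Matrix (Fin 2) (Fin 2) ℝ) 0 0 + _ = 2
    norm_num [nmat]
  · show 0 ≤ x * ((nmat (x / (n+1)) : SL2) : Matrix (Fin 2) (Fin 2) ℝ) 0 1
    have e : ((nmat (x / ((n:ℝ)+1)) : SL2) : Matrix (Fin 2) (Fin 2) ℝ) 0 1 = x / ((n:ℝ)+1) := rfl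
    rw [e, show x * (x / ((n:ℝ)+1)) = x ^ 2 / ((n:ℝ)+1) from by ring]
    positivity
  · show x * ((nmat (x / (n+1)) : SL2) : Matrix (Fin 2) (Fin 2) ℝ) 1 0 ≤ 0
    simp [nmat]
  · intro h
    have := congrArg (fun m : SL2 => (m : Matrix (Fin 2) (Fin 2) ℝ) 0 1) h
    simp [nmat, Matrix.one_apply] at this
    have hn : (0:ℝ) < (n:ℝ) + 1 := by positivity
    rcases this with h | h
    · exact hx h
    · linarith

/-- The closure of the conjugacy class of `[[1,x],[0,1]]` (x ≠ 0) in SL(2,ℝ)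
is the class together with the identity. -/
theorem closure_conjClass_nmat (x : ℝ) (hx : x ≠ 0) :
    closure (conjClass (nmat x)) = conjClass (nmat x) ∪ {1} := by
  apply Set.Subset.antisymm
  · -- closure ⊆ class ∪ {1}
    have hCclosed : IsClosed {m : SL2 | (m 0 0 : ℝ) + m 1 1 = 2 ∧ 0 ≤ x * m 0 1 ∧ x * m 1 0 ≤ 0} := by
      have h1 : IsClosed {m : SL2 | (m 0 0 : ℝ) + m 1 1 = 2} :=
        isClosed_eq ((entry_cont 0 0).add (entry_cont 1 1)) continuous_const
      have h2 : IsClosed {m : SL2 | 0 ≤ x * m 0 1} :=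
        isClosed_le continuous_const (continuous_const.mul (entry_cont 0 1))
      have h3 : IsClosed {m : SL2 | x * m 1 0 ≤ 0} :=
        isClosed_le (continuous_const.mul (entry_cont 1 0)) continuous_const
      exact h1.inter (h2.inter h3)
    intro m hm
    have hmC := closure_minimal (class_subset_C x) hCclosed hm
    by_cases h1 : m = 1
    · right; exact h1
    · left
      exact mem_class_of x hx m hmC.1 hmC.2.1 hmC.2.2 h1
  · rintro m (hm | hm)
    · exact subset_closure hm
    · rw [Set.mem_singleton_iff] at hm
      rw [hm]
      exact one_mem_closure x hx
end

section
/- Let θ ∈ ℝ with sin θ ≠ 0 and let k_θ = [[cos θ, −sin θ],[sin θ, cos θ]] ∈ SL(2,ℝ). Then the conjugacy class [k_θ] is a closed subset of SL(2,ℝ). -/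
open Matrix MeasureTheory

/-- The conjugacy class of an elliptic element `k_θ` (sin θ ≠ 0) is closed in SL(2,ℝ). -/
theorem conjClass_kmat_isClosed (θ : ℝ) (h : Real.sin θ ≠ 0) :
    IsClosed (conjClass (kmat θ)) := by
  have hset : conjClass (kmat θ) =
      {x : SL2 | (x : Matrix (Fin 2) (Fin 2) ℝ) 0 0 + (x : Matrix (Fin 2) (Fin 2) ℝ) 1 1
          = 2 * Real.cos θ} ∩
      {x : SL2 | 0 ≤ (x : Matrix (Fin 2) (Fin 2) ℝ) 1 0 * Real.sin θ} := by
    ext x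
    simp only [Set.mem_inter_iff, Set.mem_setOf_eq]
    constructor
    · rintro ⟨g, rfl⟩
      have hdet : (g : Matrix (Fin 2) (Fin 2) ℝ) 0 0 * (g : Matrix (Fin 2) (Fin 2) ℝ) 1 1
          - (g : Matrix (Fin 2) (Fin 2) ℝ) 0 1 * (g : Matrix (Fin 2) (Fin 2) ℝ) 1 0 = 1 := by
        have := g.2
        rwa [Matrix.det_fin_two] at this
      constructor
      · rw [Matrix.SpecialLinearGroup.coe_mul, Matrix.SpecialLinearGroup.coe_mul]
        simp only [Matrix.SpecialLinearGroup.coe_mul, Matrix.SpecialLinearGroup.coe_inv,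
          Matrix.adjugate_fin_two, Matrix.mul_apply, Fin.sum_univ_two, kmat,
          Matrix.cons_val', Matrix.cons_val_zero, Matrix.cons_val_one, Matrix.head_cons,
          Matrix.empty_val', Matrix.cons_val_fin_one, Matrix.head_fin_const, Matrix.of_apply]
        linear_combination (2 * Real.cos θ) * hdet
      · rw [Matrix.SpecialLinearGroup.coe_mul, Matrix.SpecialLinearGroup.coe_mul]
        simp only [Matrix.SpecialLinearGroup.coe_mul, Matrix.SpecialLinearGroup.coe_inv,
          Matrix.adjugate_fin_two, Matrix.mul_apply, Fin.sum_univ_two, kmat,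
          Matrix.cons_val', Matrix.cons_val_zero, Matrix.cons_val_one, Matrix.head_cons,
          Matrix.empty_val', Matrix.cons_val_fin_one, Matrix.head_fin_const, Matrix.of_apply]
        nlinarith [sq_nonneg ((g : Matrix (Fin 2) (Fin 2) ℝ) 1 0 * Real.sin θ),
          sq_nonneg ((g : Matrix (Fin 2) (Fin 2) ℝ) 1 1 * Real.sin θ)]
    · rintro ⟨htr, hsgn⟩
      set p := (x : Matrix (Fin 2) (Fin 2) ℝ) 0 0 with hp
      set q := (x : Matrix (Fin 2) (Fin 2) ℝ) 0 1 with hq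
      set r := (x : Matrix (Fin 2) (Fin 2) ℝ) 1 0 with hrdef
      set s := (x : Matrix (Fin 2) (Fin 2) ℝ) 1 1 with hsdef
      have hdet : p * s - q * r = 1 := by
        have := x.2
        rwa [Matrix.det_fin_two] at this
      have hsin2 : Real.sin θ ^ 2 + Real.cos θ ^ 2 = 1 := Real.sin_sq_add_cos_sq θ
      have hs2 : 0 < Real.sin θ ^ 2 := sq_pos_of_ne_zero h
      have h4 : (p + s) ^ 2 = 4 * Real.cos θ ^ 2 := by rw [htr]; ring
      have hqr : q * r < 0 := by nlinarith [sq_nonneg (p - s), h4]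
      have hrne : r ≠ 0 := by
        intro h0; rw [h0] at hqr; simp at hqr
      have hrpos : 0 < r * Real.sin θ :=
        lt_of_le_of_ne hsgn (by symm; exact mul_ne_zero hrne h)
      have hdivpos : 0 < r / Real.sin θ := by
        rcases h.lt_or_gt with hlt | hlt
        · have : r < 0 := by nlinarith
          exact div_pos_of_neg_of_neg this hlt
        · have : 0 < r := by nlinarith
          exact div_pos this hlt
      set c := Real.sqrt (r / Real.sin θ) with hcdef
      have hcpos : 0 < c := Real.sqrt_pos.mpr hdivpos
      have hcc : Real.sin θ * (c * c) = r := by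
        rw [hcdef, Real.mul_self_sqrt hdivpos.le]
        field_simp
      have hq2 : q * r = -(p - Real.cos θ) ^ 2 - Real.sin θ ^ 2 := by
        linear_combination (-1 : ℝ) * hdet + p * htr + hsin2
      refine ⟨⟨!![(p - Real.cos θ)/(Real.sin θ * c), -1/c; c, 0], ?_⟩, ?_⟩
      · rw [Matrix.det_fin_two_of]
        field_simp
        ring
      · apply Subtype.ext
        rw [Matrix.SpecialLinearGroup.coe_mul]
        erw [Matrix.SpecialLinearGroup.coe_mul]
        erw [Matrix.SpecialLinearGroup.coe_inv]
        ext i j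
        fin_cases i <;> fin_cases j <;>
          simp only [Matrix.SpecialLinearGroup.coe_mul, Matrix.SpecialLinearGroup.coe_inv,
            Matrix.adjugate_fin_two, Matrix.mul_apply, Fin.sum_univ_two, kmat,
            Matrix.cons_val', Matrix.cons_val_zero, Matrix.cons_val_one, Matrix.head_cons,
            Matrix.empty_val', Matrix.cons_val_fin_one, Matrix.head_fin_const, Matrix.of_apply,
            Fin.mk_zero, Fin.mk_one, Fin.isValue] <;>
          field_simp
        · linear_combination (Real.sin θ * c * c) * hp
        · linear_combination (-1 : ℝ) * hq2 - q * hcc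
        · linear_combination hcc + hrdef
        · linear_combination (-(Real.sin θ * c)) * htr + (Real.sin θ * c) * hsdef
  rw [hset]
  have hco : Continuous (fun x : SL2 => (x : Matrix (Fin 2) (Fin 2) ℝ)) := continuous_induced_dom
  have he : ∀ i j : Fin 2, Continuous (fun x : SL2 => (x : Matrix (Fin 2) (Fin 2) ℝ) i j) :=
    fun i j => (continuous_apply j).comp ((continuous_apply i).comp hco)
  exact ((isClosed_eq ((he 0 0).add (he 1 1)) continuous_const)).inter
    (isClosed_le continuous_const ((he 1 0).mul continuous_const))
end

section
/- For every γ ∈ SL(2,ℝ) and every Haar measure μ on SL(2,ℝ), the topological closure of the conjugacy class [γ] is a set of μ-measure zero. -/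
open Matrix MeasureTheory

/-! The closure of `[γ]` lies in the closed level set `{tr x = tr γ}`. Left translation by `n_u`
turns this level set into `{tr x + u x₁₀ = tr γ}`; for distinct `u` these meet only inside
`{x₁₀ = 0}`, which is null by the same argument applied to its translates `{t x₀₀ + x₁₀ = 0}`
by lower unipotents. An s-finite measure gives positive mass to only countably many pairwise
a.e.-disjoint sets, whereas left invariance gives all uncountably many translates the same mass. -/

namespace MeasureTheory

theorem measure_eq_zero_of_pairwise_aedisjoint_preimage_mul_left {G ι : Type*} [Group G]
    [MeasurableSpace G] [MeasurableMul G] [Uncountable ι] {μ : Measure G} [SFinite μ]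
    [μ.IsMulLeftInvariant] {s : Set G} (hs : NullMeasurableSet s μ) (g : ι → G)
    (hg : Pairwise (Function.onFun (AEDisjoint μ) fun i => (g i * ·) ⁻¹' s)) : μ s = 0 := by
  have hcount := Measure.countable_meas_pos_of_disjoint_iUnion₀
    (fun i => hs.preimage (measurePreserving_mul_left μ (g i)).quasiMeasurePreserving) hg
  simp only [measure_preimage_mul] at hcount
  by_contra h
  have huniv : {_i : ι | 0 < μ s} = Set.univ := by simp [pos_iff_ne_zero, h]
  exact Set.not_countable_univ (huniv ▸ hcount)

end MeasureTheory

instance : IsTopologicalGroup SL2 := Matrix.SpecialLinearGroup.topologicalGroup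

instance : SigmaCompactSpace SL2 :=
  have : SigmaCompactSpace (Matrix (Fin 2) (Fin 2) ℝ) :=
    inferInstanceAs (SigmaCompactSpace (Fin 2 → Fin 2 → ℝ))
  Matrix.SpecialLinearGroup.isClosedEmbedding_val.sigmaCompactSpace

def lmat (t : ℝ) : SL2 :=
  ⟨!![1, 0; t, 1], by simp [Matrix.det_fin_two_of]⟩

namespace SL2

local notation "M₂" => Matrix (Fin 2) (Fin 2) ℝ

lemma lmat_mul_apply_one_zero (t : ℝ) (x : SL2) : (lmat t * x) 1 0 = t * x 0 0 + x 1 0 := by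
  rw [Matrix.SpecialLinearGroup.coe_mul]
  simp [lmat, Matrix.mul_apply, Fin.sum_univ_two]

lemma trace_nmat_mul (u : ℝ) (x : SL2) :
    trace ((nmat u * x : SL2) : M₂) = trace (x : M₂) + u * x 1 0 := by
  rw [Matrix.SpecialLinearGroup.coe_mul]
  simp [nmat, Matrix.trace_fin_two, Matrix.vecMul, dotProduct, Fin.sum_univ_two]
  ring

lemma trace_mul_mul_inv (g γ : SL2) : trace ((g * γ * g⁻¹ : SL2) : M₂) = trace (γ : M₂) := by
  rw [Matrix.SpecialLinearGroup.coe_mul, Matrix.SpecialLinearGroup.coe_mul, Matrix.trace_mul_cycle,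
    ← Matrix.SpecialLinearGroup.coe_mul, inv_mul_cancel, Matrix.SpecialLinearGroup.coe_one, one_mul]

lemma closure_conjClass_subset_setOf_trace_eq (γ : SL2) :
    closure (conjClass γ) ⊆ {x : SL2 | trace (x : M₂) = trace (γ : M₂)} := by
  refine closure_minimal ?_ (isClosed_eq (by fun_prop) continuous_const)
  rintro _ ⟨g, rfl⟩
  exact trace_mul_mul_inv g γ

variable [MeasurableSpace SL2] [BorelSpace SL2] (μ : Measure SL2) [μ.IsHaarMeasure]

lemma measure_setOf_apply_one_zero_eq_zero : μ {x : SL2 | x 1 0 = 0} = 0 := by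
  refine MeasureTheory.measure_eq_zero_of_pairwise_aedisjoint_preimage_mul_left
    (isClosed_eq (by fun_prop) continuous_const).measurableSet.nullMeasurableSet lmat ?_
  intro t s hts
  refine Disjoint.aedisjoint (Set.disjoint_left.2 fun x hxt hxs => ?_)
  simp only [Set.mem_preimage, Set.mem_ofPred_eq, lmat_mul_apply_one_zero] at hxt hxs
  have h00 : x 0 0 = 0 := by
    have : (t - s) * x 0 0 = 0 := by linear_combination hxt - hxs
    exact (mul_eq_zero.1 this).resolve_left (sub_ne_zero.2 hts)
  have h10 : x 1 0 = 0 := by simpa [h00] using hxt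
  have hdet := x.det_coe
  rw [Matrix.det_fin_two, h00, h10] at hdet
  simp at hdet

lemma measure_setOf_trace_eq_eq_zero (c : ℝ) : μ {x : SL2 | trace (x : M₂) = c} = 0 := by
  refine MeasureTheory.measure_eq_zero_of_pairwise_aedisjoint_preimage_mul_left
    (isClosed_eq (by fun_prop) continuous_const).measurableSet.nullMeasurableSet nmat ?_
  intro u v huv
  refine measure_mono_null (fun x ⟨hxu, hxv⟩ => ?_) (measure_setOf_apply_one_zero_eq_zero μ)
  simp only [Set.mem_preimage, Set.mem_ofPred_eq, trace_nmat_mul] at hxu hxv ⊢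
  have : (u - v) * x 1 0 = 0 := by linear_combination hxu - hxv
  exact (mul_eq_zero.1 this).resolve_left (sub_ne_zero.2 huv)

end SL2

theorem haar_measure_closure_conjClass_eq_zero_general
    [MeasurableSpace SL2] [BorelSpace SL2] (γ : SL2)
    (μ : MeasureTheory.Measure SL2) [μ.IsHaarMeasure] :
    μ (closure (conjClass γ)) = 0 :=
  measure_mono_null (SL2.closure_conjClass_subset_setOf_trace_eq γ)
    (SL2.measure_setOf_trace_eq_eq_zero μ _)

/-- The closure of any conjugacy class in SL(2,ℝ) has measure zero with respect to
any (left-invariant, regular) Haar measure. -/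
theorem haar_measure_closure_conjClass_eq_zero
    [MeasurableSpace SL2] [BorelSpace SL2] (γ : SL2)
    (μ : MeasureTheory.Measure SL2) [μ.IsHaarMeasure] [μ.Regular] :
    μ (closure (conjClass γ)) = 0 :=
  haar_measure_closure_conjClass_eq_zero_general γ μ
end

section
/- Let θ₀ ∈ ℝ and δ > 0 be such that the open interval (θ₀ − δ, θ₀ + δ) contains no integer multiple of π. Then the set K_{θ₀,δ} = ⋃_{θ ∈ (θ₀−δ, θ₀+δ)} [k_θ] (the union of the conjugacy classes of the rotation matrices k_θ for θ in this interval) is an open subset of SL(2,ℝ). -/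
open Matrix MeasureTheory

/-! For `sin θ ≠ 0`, an element `g` of `SL(2,ℝ)` is conjugate to `k_θ` exactly when
`tr g = 2 cos θ` and its lower-left entry has the sign of `sin θ`. An interval avoiding `πℤ`
lies in some `(nπ, (n+1)π)`, where `sin` has the constant sign `(-1)ⁿ` and `cos` is inverted by
`y ↦ nπ + arccos ((-1)ⁿ y)`. So the union of the conjugacy classes is
`{g | nπ + arccos ((-1)ⁿ tr g / 2) ∈ I, 0 < (-1)ⁿ g₁₀}`, a preimage of open sets under
continuous maps. -/

open Real Set

lemma Matrix.SpecialLinearGroup.trace_conj {n R : Type*} [DecidableEq n] [Fintype n] [CommRing R]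
    (u γ : SpecialLinearGroup n R) :
    trace ((u * γ * u⁻¹ : SpecialLinearGroup n R) : Matrix n n R) = trace (γ : Matrix n n R) := by
  rw [coe_mul, coe_mul, trace_mul_cycle, ← coe_mul, inv_mul_cancel, coe_one, one_mul]

lemma coe_kmat (θ : ℝ) :
    (kmat θ : Matrix (Fin 2) (Fin 2) ℝ) = !![cos θ, -sin θ; sin θ, cos θ] :=
  rfl

lemma trace_kmat (θ : ℝ) : trace (kmat θ : Matrix (Fin 2) (Fin 2) ℝ) = 2 * cos θ := by
  rw [coe_kmat, trace_fin_two_of, two_mul]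

lemma conj_kmat_apply_one_zero (u : SL2) (θ : ℝ) :
    (u * kmat θ * u⁻¹) 1 0 = sin θ * (u 1 0 ^ 2 + u 1 1 ^ 2) := by
  simp [Matrix.SpecialLinearGroup.coe_inv, adjugate_fin_two, mul_apply, Fin.sum_univ_two, coe_kmat]
  ring

lemma exists_mul_kmat_eq_mul {θ : ℝ} {g : SL2}
    (htr : trace (g : Matrix (Fin 2) (Fin 2) ℝ) = 2 * cos θ) (hpos : 0 < sin θ * g 1 0) :
    ∃ u : SL2, u * kmat θ = g * u := by
  have hs : sin θ ≠ 0 := left_ne_zero_of_mul hpos.ne'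
  have hC : g 1 0 ≠ 0 := right_ne_zero_of_mul hpos.ne'
  have hsC : 0 < sin θ / g 1 0 := by
    simpa [mul_div_mul_right _ _ hC] using div_pos hpos (mul_self_pos.2 hC)
  set x := √(sin θ / g 1 0)
  have hx : 0 < x := sqrt_pos.2 hsC
  have hx2 : x ^ 2 * g 1 0 = sin θ := by rw [sq_sqrt hsC.le]; field_simp
  -- The columns `x e₁` and `(g - cos θ) x e₁ / sin θ` of `u` satisfy `g u = u k_θ`,
  -- and `x` normalises `det u` to `1`.
  obtain ⟨u, hu⟩ : ∃ u : SL2,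
      (u : Matrix (Fin 2) (Fin 2) ℝ) = !![x, x * (g 0 0 - g 1 1) / (2 * sin θ); 0, x⁻¹] :=
    ⟨⟨_, by simp [det_fin_two_of, hx.ne']⟩, rfl⟩
  have hdet : g 0 0 * g 1 1 - g 0 1 * g 1 0 = 1 := by rw [← det_fin_two]; exact g.det_coe
  have hpyth := sin_sq_add_cos_sq θ
  rw [trace_fin_two] at htr
  refine ⟨u, Matrix.SpecialLinearGroup.ext _ _ fun i j => ?_⟩
  rw [Matrix.SpecialLinearGroup.coe_mul, Matrix.SpecialLinearGroup.coe_mul, hu, coe_kmat]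
  fin_cases i <;> fin_cases j <;> simp [mul_apply, Fin.sum_univ_two] <;> field_simp
  · linear_combination -htr
  · linear_combination (-(x ^ 2 * (g 0 0 + cos θ))) * htr + 2 * g 0 1 * hx2 + 2 * x ^ 2 * hdet -
      2 * x ^ 2 * hpyth
  · linear_combination -hx2
  · linear_combination (g 1 1 - g 0 0) * hx2 - sin θ * htr

lemma mem_conjClass_kmat_iff {θ : ℝ} (hs : sin θ ≠ 0) {g : SL2} :
    g ∈ conjClass (kmat θ) ↔
      trace (g : Matrix (Fin 2) (Fin 2) ℝ) = 2 * cos θ ∧ 0 < sin θ * g 1 0 := by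
  constructor
  · rintro ⟨u, rfl⟩
    refine ⟨(Matrix.SpecialLinearGroup.trace_conj u _).trans (trace_kmat θ), ?_⟩
    have hu : 0 < u 1 0 ^ 2 + u 1 1 ^ 2 := by
      rcases (Matrix.SpecialLinearGroup.isCoprime_row u 1).ne_zero_or_ne_zero with h | h <;>
        positivity
    rw [conj_kmat_apply_one_zero, ← mul_assoc]
    exact mul_pos (mul_self_pos.2 hs) hu
  · rintro ⟨htr, hpos⟩
    obtain ⟨u, hu⟩ := exists_mul_kmat_eq_mul htr hpos
    exact ⟨u, by rw [hu, mul_inv_cancel_right]⟩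

lemma neg_one_zpow_mul_self {α : Type*} [Field α] (n : ℤ) : ((-1 : α) ^ n) * (-1) ^ n = 1 := by
  rw [← mul_zpow]; norm_num

lemma neg_one_zpow_mul_sin_pos {n : ℤ} {θ : ℝ} (hθ : θ ∈ Ioo (n * π) ((n + 1) * π)) :
    0 < (-1) ^ n * sin θ := by
  rw [← sin_sub_int_mul_pi]
  exact sin_pos_of_pos_of_lt_pi (by linarith [hθ.1]) (by linarith [hθ.2])

lemma arccos_neg_one_zpow_mul_eq_iff {n : ℤ} {θ : ℝ} (hθ : θ ∈ Ioo (n * π) ((n + 1) * π))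
    (y : ℝ) : arccos ((-1) ^ n * y) = θ - n * π ↔ cos θ = y := by
  have h0 : 0 < θ - n * π := by linarith [hθ.1]
  have hπ : θ - n * π < π := by linarith [hθ.2]
  constructor
  · intro h
    have hcos := cos_arccos (arccos_lt_pi.1 (h ▸ hπ)).le (arccos_pos.1 (h ▸ h0)).le
    rw [h, cos_sub_int_mul_pi] at hcos
    calc cos θ = (-1) ^ n * ((-1) ^ n * cos θ) := by rw [← mul_assoc, neg_one_zpow_mul_self, one_mul]
      _ = y := by rw [hcos, ← mul_assoc, neg_one_zpow_mul_self, one_mul]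
  · rintro rfl
    rw [← cos_sub_int_mul_pi, arccos_cos h0.le hπ.le]

lemma iUnion_conjClass_kmat_eq {n : ℤ} {I : Set ℝ} (hI : I ⊆ Ioo (n * π) ((n + 1) * π)) :
    ⋃ θ ∈ I, conjClass (kmat θ) =
      {g : SL2 | n * π + arccos ((-1) ^ n * (trace (g : Matrix (Fin 2) (Fin 2) ℝ) / 2)) ∈ I} ∩
        {g : SL2 | 0 < (-1) ^ n * g 1 0} := by
  ext g
  set ε : ℝ := (-1) ^ n
  set t := trace (g : Matrix (Fin 2) (Fin 2) ℝ)
  have key : ∀ θ ∈ I,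
      g ∈ conjClass (kmat θ) ↔ n * π + arccos (ε * (t / 2)) = θ ∧ 0 < ε * g 1 0 := by
    intro θ hθI
    have hθ := hI hθI
    have hsin := neg_one_zpow_mul_sin_pos hθ
    have hsign : sin θ * g 1 0 = (ε * sin θ) * (ε * g 1 0) := by
      linear_combination (-(sin θ * g 1 0)) * neg_one_zpow_mul_self (α := ℝ) n
    rw [mem_conjClass_kmat_iff (right_ne_zero_of_mul hsin.ne'), ← eq_sub_iff_add_eq',
      arccos_neg_one_zpow_mul_eq_iff hθ, hsign, mul_pos_iff_of_pos_left hsin,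
      eq_div_iff two_ne_zero, mul_comm, eq_comm]
  simp only [mem_iUnion, exists_prop, mem_inter_iff, mem_ofPred_eq]
  constructor
  · rintro ⟨θ, hθI, hg⟩
    obtain ⟨rfl, hpos⟩ := (key θ hθI).1 hg
    exact ⟨hθI, hpos⟩
  · rintro ⟨hθI, hpos⟩
    exact ⟨_, hθI, (key _ hθI).2 ⟨rfl, hpos⟩⟩

lemma isOpen_iUnion_conjClass_kmat {n : ℤ} {I : Set ℝ} (hIo : IsOpen I)
    (hI : I ⊆ Ioo (n * π) ((n + 1) * π)) : IsOpen (⋃ θ ∈ I, conjClass (kmat θ)) := by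
  have hcoe : Continuous (fun g : SL2 => (g : Matrix (Fin 2) (Fin 2) ℝ)) := continuous_induced_dom
  rw [iUnion_conjClass_kmat_eq hI]
  refine (hIo.preimage ?_).inter (isOpen_lt continuous_const ?_)
  · exact continuous_const.add
      (continuous_arccos.comp (continuous_const.mul (hcoe.matrix_trace.div_const 2)))
  · exact continuous_const.mul (hcoe.matrix_elem 1 0)

lemma exists_Ioo_subset_Ioo_int_mul {p a b : ℝ} (hp : 0 < p)
    (h : ∀ n : ℤ, (n : ℝ) * p ∉ Ioo a b) : ∃ n : ℤ, Ioo a b ⊆ Ioo (n * p) ((n + 1) * p) := by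
  have hle : (⌊a / p⌋ : ℝ) * p ≤ a := (le_div_iff₀ hp).1 (Int.floor_le _)
  have hlt : a < (⌊a / p⌋ + 1 : ℝ) * p := (div_lt_iff₀ hp).1 (Int.lt_floor_add_one _)
  refine ⟨⌊a / p⌋, fun θ hθ => ⟨hle.trans_lt hθ.1, lt_of_not_ge fun hge => h (⌊a / p⌋ + 1) ?_⟩⟩
  push_cast
  exact ⟨hlt, hge.trans_lt hθ.2⟩

theorem isOpen_union_conjClass_kmat_general (θ₀ δ : ℝ)
    (h : ∀ n : ℤ, (n : ℝ) * Real.pi ∉ Set.Ioo (θ₀ - δ) (θ₀ + δ)) :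
    IsOpen (⋃ θ ∈ Set.Ioo (θ₀ - δ) (θ₀ + δ), conjClass (kmat θ)) := by
  obtain ⟨n, hn⟩ := exists_Ioo_subset_Ioo_int_mul pi_pos h
  exact isOpen_iUnion_conjClass_kmat isOpen_Ioo hn

/-- If the interval (θ₀ − δ, θ₀ + δ) contains no integer multiple of π, then the union
of the conjugacy classes of the rotations k_θ, θ in this interval, is open in SL(2,ℝ). -/
theorem isOpen_union_conjClass_kmat (θ₀ δ : ℝ) (hδ : 0 < δ)
    (h : ∀ n : ℤ, (n : ℝ) * Real.pi ∉ Set.Ioo (θ₀ - δ) (θ₀ + δ)) :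
    IsOpen (⋃ θ ∈ Set.Ioo (θ₀ - δ) (θ₀ + δ), conjClass (kmat θ)) :=
  isOpen_union_conjClass_kmat_general θ₀ δ h
end

section
/- Let t₀ ∈ ℝ and ε > 0 be such that 0 ∉ (t₀ − ε, t₀ + ε). Then the set A_{t₀,ε} = ⋃_{t ∈ (t₀−ε, t₀+ε)} [a_t] (the union of the conjugacy classes of the diagonal matrices a_t for t in this interval) is an open subset of SL(2,ℝ). -/
open Matrix MeasureTheory

/-!
Conjugation preserves the trace. Conversely, an element of `SL(2,ℝ)` of trace
`eᵗ + e⁻ᵗ = 2 cosh t` with `t ≠ 0` has the two distinct eigenvalues `e^{±t}`, hence is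
conjugate to `a_t`. So the union is the preimage under the continuous trace map of
`2 cosh '' (t₀ - ε, t₀ + ε)`, and this image is open because `cosh` is a local diffeomorphism
away from `0`, the only zero of its derivative `sinh`.
-/

open Real

/- The columns of `P` are eigenvectors of `A` for `L` and `M`, taken from the columns of `A - M`
and `A - L` (Cayley–Hamilton), with the first one rescaled so that `det P = 1`. -/
theorem Matrix.exists_det_eq_one_mul_eq_mul_of_trace_of_det {K : Type*} [Field K]
    (A : Matrix (Fin 2) (Fin 2) K) {L M : K} (hLM : L ≠ M) (htr : A.trace = L + M)
    (hdet : A.det = L * M) :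
    ∃ P : Matrix (Fin 2) (Fin 2) K, P.det = 1 ∧ P * !![L, 0; 0, M] = A * P := by
  obtain ⟨a, b, c, d, rfl⟩ : ∃ a b c d, A = !![a, b; c, d] := ⟨_, _, _, _, A.eta_fin_two⟩
  rw [trace_fin_two_of] at htr
  rw [det_fin_two_of] at hdet
  obtain rfl : d = L + M - a := by linear_combination htr
  have hbc : b * c = (L - a) * (a - M) := by linear_combination -hdet
  by_cases hc : c = 0
  · by_cases hb : b = 0
    · subst hb hc
      obtain rfl | rfl : L = a ∨ a = M := by simpa [sub_eq_zero] using hbc.symm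
      · exact ⟨1, det_one, by simp⟩
      · exact ⟨!![0, -1; 1, 0], by simp, by simp⟩
    · obtain rfl : c = (L - a) * (a - M) / b := by field_simp; linear_combination hbc
      refine ⟨!![(M - L)⁻¹, b; (L - a) / (b * (M - L)), M - a], ?_, ?_⟩
      · rw [det_fin_two_of]; field_simp; ring
      · ext i j; fin_cases i <;> fin_cases j <;> simp <;> field_simp <;> ring
  · obtain rfl : b = (L - a) * (a - M) / c := by field_simp; linear_combination hbc
    refine ⟨!![(a - M) / (c * (L - M)), a - L; (L - M)⁻¹, c], ?_, ?_⟩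
    · rw [det_fin_two_of]; field_simp; ring
    · ext i j; fin_cases i <;> fin_cases j <;> simp <;> field_simp <;> ring

theorem isOpen_image_of_hasStrictDerivAt_ne_zero {𝕜 : Type*} [NontriviallyNormedField 𝕜]
    [CompleteSpace 𝕜] {f f' : 𝕜 → 𝕜} {U : Set 𝕜} (hU : IsOpen U)
    (hf : ∀ x ∈ U, HasStrictDerivAt f (f' x) x) (hf' : ∀ x ∈ U, f' x ≠ 0) :
    IsOpen (f '' U) := by
  refine isOpen_iff_mem_nhds.2 ?_
  rintro _ ⟨x, hx, rfl⟩
  rw [← (hf x hx).map_nhds_eq (hf' x hx)]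
  exact Filter.image_mem_map (hU.mem_nhds hx)

lemma continuous_trace_coe : Continuous fun g : SL2 => (g : Matrix (Fin 2) (Fin 2) ℝ).trace :=
  continuous_induced_dom.matrix_trace

lemma trace_coe_of_mem_conjClass {γ x : SL2} (hx : x ∈ conjClass γ) :
    (x : Matrix (Fin 2) (Fin 2) ℝ).trace = (γ : Matrix (Fin 2) (Fin 2) ℝ).trace := by
  obtain ⟨g, rfl⟩ := hx
  rw [Matrix.SpecialLinearGroup.coe_mul, Matrix.SpecialLinearGroup.coe_mul, trace_mul_cycle,
    ← Matrix.SpecialLinearGroup.coe_mul, inv_mul_cancel,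
    Matrix.SpecialLinearGroup.coe_one, one_mul]

lemma mem_conjClass_of_mul_eq_mul {γ x P : SL2} (h : P * γ = x * P) : x ∈ conjClass γ :=
  ⟨P, by rw [h, mul_inv_cancel_right]⟩

lemma trace_coe_amat (t : ℝ) : (amat t : Matrix (Fin 2) (Fin 2) ℝ).trace = 2 * cosh t := by
  simp [amat, cosh_eq]
  ring

lemma mem_conjClass_amat_iff {t : ℝ} (ht : t ≠ 0) {g : SL2} :
    g ∈ conjClass (amat t) ↔ (g : Matrix (Fin 2) (Fin 2) ℝ).trace = 2 * cosh t := by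
  refine ⟨fun hg => trace_coe_amat t ▸ trace_coe_of_mem_conjClass hg, fun hg => ?_⟩
  have hne : exp t ≠ exp (-t) := by
    rw [Ne, exp_eq_exp]
    contrapose! ht
    linarith
  obtain ⟨P, hPdet, hP⟩ :=
    (g : Matrix (Fin 2) (Fin 2) ℝ).exists_det_eq_one_mul_eq_mul_of_trace_of_det hne
      (by rw [hg, cosh_eq]; ring) (by rw [g.2, ← exp_add]; simp)
  exact mem_conjClass_of_mul_eq_mul (P := ⟨P, hPdet⟩) (Subtype.ext hP)

lemma isOpen_iUnion_conjClass_amat {U : Set ℝ} (hU : IsOpen U) (h0 : (0 : ℝ) ∉ U) :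
    IsOpen (⋃ t ∈ U, conjClass (amat t)) := by
  have hne : ∀ t ∈ U, t ≠ 0 := fun _ ht => ne_of_mem_of_not_mem ht h0
  have hpre : (⋃ t ∈ U, conjClass (amat t)) =
      (fun g : SL2 => (g : Matrix (Fin 2) (Fin 2) ℝ).trace) ⁻¹' ((2 * cosh ·) '' U) := by
    ext g
    simp only [Set.mem_iUnion, Set.mem_preimage, Set.mem_image, exists_prop]
    exact exists_congr fun t => and_congr_right fun ht =>
      (mem_conjClass_amat_iff (hne t ht)).trans eq_comm
  rw [hpre]
  refine continuous_trace_coe.isOpen_preimage _ (isOpen_image_of_hasStrictDerivAt_ne_zero hU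
    (fun t _ => (hasStrictDerivAt_cosh t).const_mul 2) fun t ht => ?_)
  simpa using hne t ht

theorem isOpen_union_conjClass_amat_general (t₀ ε : ℝ)
    (h : (0 : ℝ) ∉ Set.Ioo (t₀ - ε) (t₀ + ε)) :
    IsOpen (⋃ t ∈ Set.Ioo (t₀ - ε) (t₀ + ε), conjClass (amat t)) :=
  isOpen_iUnion_conjClass_amat isOpen_Ioo h

/-- If 0 ∉ (t₀ − ε, t₀ + ε), then the union of the conjugacy classes of the diagonal
matrices a_t, t in this interval, is open in SL(2,ℝ). -/
theorem isOpen_union_conjClass_amat (t₀ ε : ℝ) (hε : 0 < ε)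
    (h : (0 : ℝ) ∉ Set.Ioo (t₀ - ε) (t₀ + ε)) :
    IsOpen (⋃ t ∈ Set.Ioo (t₀ - ε) (t₀ + ε), conjClass (amat t)) :=
  isOpen_union_conjClass_amat_general t₀ ε h
end
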